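/- Set a = n − m, and let s, t be integers with s < t < a (a vertex of type 3^a); put χ = min(a, t − s − 1). Let M be the matrix with rows (1, i, j), (0, 1, 0), (0, z, 1), where i ∈ 𝒪/𝒫^{-s}, j ∈ 𝒫^{-χ}/𝒫^{-t}, and z ∈ 𝒫/𝒫^{t-s}. Then M represents a γ-fixed point at the vertex (s,t) if and only if v(j) ≥ −t − m, v(z) ≥ t − s − n, and j·z·(1 − u₃/u₂) + i·(u₁/u₂ − 1) ∈ 𝒫^{-s}. -/

import Mathlib

/-!
Since `M · x_{(s,t)}` is invertible, `γ` fixes the vertex exactly when the conjugate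
`(M x_{(s,t)})⁻¹ γ (M x_{(s,t)})` lies in `GL₃(𝒪)`. This conjugate is computed explicitly: it has
the units `u₁, u₂, u₃` on the diagonal, so its determinant is a unit, and its only other nonzero
entries are `π^s u₂ (j z (1 - u₃/u₂) + i (u₁/u₂ - 1))`, `π^t (u₁ - u₃) j` and
`π^{s-t} (u₃ - u₂) z`. As `v(u₁ - u₃) = m` and `v(u₃ - u₂) = n`, integrality of these three
entries is the three stated conditions.
-/

noncomputable section

/-- The element π of F = K((π)). -/
def pp (K : Type*) [Field K] : LaurentSeries K := HahnSeries.single (1 : ℤ) (1 : K)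

/-- The π-adic valuation on F = K((π)), with v(0) = ⊤. -/
def vv {K : Type*} [Field K] (x : LaurentSeries K) : WithTop ℤ := x.orderTop

/-- x ∈ 𝒫^r, i.e. v(x) ≥ r. -/
def inP {K : Type*} [Field K] (r : ℤ) (x : LaurentSeries K) : Prop := (r : WithTop ℤ) ≤ vv x

/-- x ∈ 𝒫^r/𝒫^{r'} : x is a polynomial x_r π^r + ⋯ + x_{r'-1} π^{r'-1} (possibly 0). -/
def inPQ {K : Type*} [Field K] (r r' : ℤ) (x : LaurentSeries K) : Prop :=
  inP r x ∧ ∀ i : ℤ, r' ≤ i → x.coeff i = 0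

/-- Membership in GL₃(𝒪): entries in 𝒪 and determinant a unit of 𝒪. -/
def inGLO {K : Type*} [Field K] (C : Matrix (Fin 3) (Fin 3) (LaurentSeries K)) : Prop :=
  (∀ i j, inP 0 (C i j)) ∧ vv C.det = 0

/-- The matrix x_{(s,t)} = diag(1, π^s, π^t). -/
def xst (K : Type*) [Field K] (s t : ℤ) : Matrix (Fin 3) (Fin 3) (LaurentSeries K) :=
  Matrix.diagonal ![1, pp K ^ s, pp K ^ t]

/-- Membership in the subgroup I^a of GL₃(F). -/
def inIa {K : Type*} [Field K] (a : ℤ) (g : Matrix (Fin 3) (Fin 3) (LaurentSeries K)) : Prop :=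
  g.det ≠ 0 ∧
  vv (g 0 0) = 0 ∧ vv (g 1 1) = 0 ∧ vv (g 2 2) = 0 ∧
  inP (-a) (g 0 1) ∧ inP (-a) (g 0 2) ∧ inP 0 (g 1 2) ∧
  inP (a + 1) (g 1 0) ∧ inP (a + 1) (g 2 0) ∧ inP 1 (g 2 1)

/-- Membership in x_{(s,t)}·GL₃(𝒪)·x_{(s,t)}⁻¹. -/
def inConj {K : Type*} [Field K] (s t : ℤ) (g : Matrix (Fin 3) (Fin 3) (LaurentSeries K)) : Prop :=
  ∃ C, inGLO C ∧ g = xst K s t * C * (xst K s t)⁻¹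

/-- M represents a γ-fixed point at the vertex (s,t): there is C ∈ GL₃(𝒪) with
γ·M·x_{(s,t)} = M·x_{(s,t)}·C. -/
def reprFixed {K : Type*} [Field K] (γ M : Matrix (Fin 3) (Fin 3) (LaurentSeries K))
    (s t : ℤ) : Prop :=
  ∃ C, inGLO C ∧ γ * (M * xst K s t) = M * xst K s t * C

section Valuation

variable {K : Type*} [Field K]

lemma vv_mul (x y : LaurentSeries K) : vv (x * y) = vv x + vv y :=
  HahnSeries.orderTop_mul x y

lemma vv_sub_comm (x y : LaurentSeries K) : vv (x - y) = vv (y - x) := by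
  rw [← neg_sub, vv, HahnSeries.orderTop_neg, vv]

lemma vv_sub_eq {u : LaurentSeries K} (hu : u ≠ 0) (x : LaurentSeries K) :
    vv (u - x) = vv u + vv (1 - x / u) := by
  rw [← vv_mul, mul_one_sub, mul_div_cancel₀ x hu]

lemma ne_zero_of_vv_eq_zero {x : LaurentSeries K} (hx : vv x = 0) : x ≠ 0 := by
  rintro rfl
  simp [vv] at hx

lemma vv_pp_zpow (s : ℤ) : vv (pp K ^ s) = s := by
  rw [pp, ← RatFunc.single_zpow, vv, HahnSeries.orderTop_single one_ne_zero]

lemma pp_ne_zero : pp K ≠ 0 :=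
  HahnSeries.single_ne_zero one_ne_zero

lemma inP_mul_iff {w : LaurentSeries K} {c : ℤ} (hw : vv w = c) (e : ℤ) (x : LaurentSeries K) :
    inP e (w * x) ↔ inP (e - c) x := by
  unfold inP
  rw [vv_mul, hw]
  induction vv x using WithTop.recTopCoe with
  | top => simp
  | coe d => norm_cast; omega

end Valuation

section Matrices

variable {K : Type*} [Field K]

lemma inGLO_iff_of_units {a d f : LaurentSeries K} (ha : vv a = 0) (hd : vv d = 0) (hf : vv f = 0)
    (b c e : LaurentSeries K) :
    inGLO !![a, b, c; 0, d, 0; 0, e, f] ↔ inP 0 b ∧ inP 0 c ∧ inP 0 e := by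
  have ha₀ : inP 0 a := ha.symm.le
  have hd₀ : inP 0 d := hd.symm.le
  have hf₀ : inP 0 f := hf.symm.le
  have hzero : inP 0 (0 : LaurentSeries K) := by simp [inP, vv]
  have hdet : vv (!![a, b, c; 0, d, 0; 0, e, f]).det = 0 := by
    rw [Matrix.det_fin_three]
    simp [vv_mul, ha, hd, hf]
  constructor
  · rintro ⟨hC, -⟩
    exact ⟨hC 0 1, hC 0 2, hC 2 1⟩
  · rintro ⟨hb, hc, he⟩
    refine ⟨fun p q => ?_, hdet⟩
    fin_cases p <;> fin_cases q <;> simpa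

lemma reprFixed_iff_inGLO {γ M C₀ : Matrix (Fin 3) (Fin 3) (LaurentSeries K)} {s t : ℤ}
    (hM : IsUnit M.det) (h : γ * (M * xst K s t) = M * xst K s t * C₀) :
    reprFixed γ M s t ↔ inGLO C₀ := by
  have hMx : IsUnit (M * xst K s t) := by
    rw [Matrix.isUnit_iff_isUnit_det, Matrix.det_mul, xst, Matrix.det_diagonal]
    refine hM.mul (IsUnit.mk0 _ ?_)
    simp [Fin.prod_univ_three, zpow_ne_zero, pp_ne_zero]
  constructor
  · rintro ⟨C, hC, hγ⟩
    rwa [hMx.mul_left_cancel (h.symm.trans hγ)]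
  · exact fun hC₀ => ⟨C₀, hC₀, h⟩

lemma diagonal_mul_mul_xst_eq {u₁ u₂ u₃ : LaurentSeries K} (hu₂ : u₂ ≠ 0) (s t : ℤ)
    (i j z : LaurentSeries K) :
    Matrix.diagonal ![u₁, u₂, u₃] * (!![1, i, j; 0, 1, 0; 0, z, 1] * xst K s t) =
      !![1, i, j; 0, 1, 0; 0, z, 1] * xst K s t *
        !![u₁, pp K ^ s * (u₂ * (j * z * (1 - u₃ / u₂) + i * (u₁ / u₂ - 1))),
            pp K ^ t * (u₁ - u₃) * j;
          0, u₂, 0;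
          0, pp K ^ (s - t) * (u₃ - u₂) * z, u₃] := by
  have hs : pp K ^ s = pp K ^ (s - t) * pp K ^ t := by
    rw [← zpow_add₀ pp_ne_zero, sub_add_cancel]
  rw [xst, hs]
  generalize pp K ^ (s - t) = p
  generalize pp K ^ t = q
  simp only [Matrix.diagonal_vec3, Matrix.mul_fin_three]
  refine Matrix.ext fun k l => ?_
  fin_cases k <;> fin_cases l <;> simp <;> field_simp <;> ring

end Matrices

theorem stmt16_general (K : Type*) [Field K]
    (u₁ u₂ u₃ : LaurentSeries K) (m n : ℤ)
    (hu₁ : vv u₁ = 0) (hu₂ : vv u₂ = 0) (hu₃ : vv u₃ = 0)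
    (hv₁₃ : vv (1 - u₁ / u₃) = (m : WithTop ℤ))
    (hv₂₃ : vv (1 - u₂ / u₃) = (n : WithTop ℤ))
    (s t : ℤ)
    (i j z : LaurentSeries K) :
    reprFixed (Matrix.diagonal ![u₁, u₂, u₃]) !![1, i, j; 0, 1, 0; 0, z, 1] s t ↔
      (((-t - m : ℤ) : WithTop ℤ) ≤ vv j ∧ ((t - s - n : ℤ) : WithTop ℤ) ≤ vv z ∧
        inP (-s) (j * z * (1 - u₃ / u₂) + i * (u₁ / u₂ - 1))) := by
  have hu₃₀ := ne_zero_of_vv_eq_zero hu₃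
  have hw₀₂ : vv (pp K ^ t * (u₁ - u₃)) = (t + m : ℤ) := by
    rw [vv_mul, vv_pp_zpow, vv_sub_comm, vv_sub_eq hu₃₀, hu₃, hv₁₃, zero_add, WithTop.coe_add]
  have hw₂₁ : vv (pp K ^ (s - t) * (u₃ - u₂)) = (s - t + n : ℤ) := by
    rw [vv_mul, vv_pp_zpow, vv_sub_eq hu₃₀, hu₃, hv₂₃, zero_add, WithTop.coe_add]
  rw [reprFixed_iff_inGLO (by simp [Matrix.det_fin_three])
      (diagonal_mul_mul_xst_eq (ne_zero_of_vv_eq_zero hu₂) s t i j z),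
    inGLO_iff_of_units hu₁ hu₂ hu₃, inP_mul_iff (vv_pp_zpow s), inP_mul_iff hu₂,
    inP_mul_iff hw₀₂, inP_mul_iff hw₂₁, and_rotate]
  simp only [zero_sub, sub_zero, neg_add', neg_sub]
  rfl

theorem stmt16 (K : Type*) [Field K]
    (u₁ u₂ u₃ : LaurentSeries K) (m n : ℤ)
    (hu₁ : vv u₁ = 0) (hu₂ : vv u₂ = 0) (hu₃ : vv u₃ = 0)
    (h₁₂ : u₁ ≠ u₂) (h₁₃ : u₁ ≠ u₃) (h₂₃ : u₂ ≠ u₃)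
    (hm : 0 ≤ m) (hmn : m ≤ n)
    (hv₁₂ : vv (1 - u₁ / u₂) = (m : WithTop ℤ))
    (hv₁₃ : vv (1 - u₁ / u₃) = (m : WithTop ℤ))
    (hv₂₃ : vv (1 - u₂ / u₃) = (n : WithTop ℤ))
    (a s t χ : ℤ) (ha : a = n - m) (hst : s < t) (hta : t < a) (hχ : χ = min a (t - s - 1))
    (i j z : LaurentSeries K) (hi : inPQ 0 (-s) i) (hj : inPQ (-χ) (-t) j)
    (hz : inPQ 1 (t - s) z) :
    reprFixed (Matrix.diagonal ![u₁, u₂, u₃]) !![1, i, j; 0, 1, 0; 0, z, 1] s t ↔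
      (((-t - m : ℤ) : WithTop ℤ) ≤ vv j ∧ ((t - s - n : ℤ) : WithTop ℤ) ≤ vv z ∧
        inP (-s) (j * z * (1 - u₃ / u₂) + i * (u₁ / u₂ - 1))) :=
  stmt16_general K u₁ u₂ u₃ m n hu₁ hu₂ hu₃ hv₁₃ hv₂₃ s t i j z
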